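/- Let 𝔪 = Σ_{i∈I} Δ_i be a multisegment with depth function 𝔡 and let d be its maximal depth. If i ∈ I satisfies 𝔡(i) = d and b(Δ_i) = min 𝔪, and further min 𝔩(𝔪) = min 𝔪, then Δ_{i₀}, the segment of the highest ladder 𝔩(𝔪) with begin point min 𝔪, is exactly the maximal-containment segment among {Δ_j : 𝔡(j) = d}, i.e., Δ_{i₀} ⊇ Δ_j for all j of depth d and Δ_{i₀} occurs as a segment of 𝔪 with depth d. -/

import Mathlib

/-- A segment `[a,b]` of integers with `a ≤ b`. -/
structure Segment where
  a : ℤ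
  b : ℤ
  hle : a ≤ b

namespace Segment

/-- `s ≪ t` iff both the begin and end points of `s` are strictly smaller. -/
def ll (s t : Segment) : Prop := s.a < t.a ∧ s.b < t.b

/-- Containment of segments: `s ⊆ t`. -/
def sub (s t : Segment) : Prop := t.a ≤ s.a ∧ s.b ≤ t.b

/-- Strict containment of segments: `s ⊊ t`. -/
def ssub (s t : Segment) : Prop := sub s t ∧ s ≠ t

end Segment

/-- There is a `≪`-ascending chain of length `j` in the family `Δ` starting at index `i`. -/
def ChainFrom {I : Type*} (Δ : I → Segment) (i : I) (j : ℕ) : Prop :=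
  ∃ f : Fin (j + 1) → I, f 0 = i ∧
    ∀ r : Fin j, Segment.ll (Δ (f r.castSucc)) (Δ (f r.succ))

/-- `d` is the depth function of the multisegment `Δ`: `d i` is the maximal length of a
`≪`-ascending chain starting at `Δ i`. -/
def IsDepth {I : Type*} (Δ : I → Segment) (d : I → ℕ) : Prop :=
  ∀ i, IsGreatest {j | ChainFrom Δ i j} (d i)

/-- The data of one step of the Knuth (RSK row-extraction) algorithm on a multisegment
`Δ : I → Segment`: the depth function `d`, admissible enumerations `L k` of the depth fibers
(containment-decreasing lists), the permutation `σ` cycling each fiber, and the segments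
`Δ' i = [b(Δ i), e(Δ (σ i))]`. -/
structure KnuthData (I : Type*) where
  Δ : I → Segment
  d : I → ℕ
  σ : Equiv.Perm I
  L : ℕ → List I
  Δ' : I → Segment
  hd : IsDepth Δ d
  hnodup : ∀ k, (L k).Nodup
  hmem : ∀ k i, i ∈ L k ↔ d i = k
  hchain : ∀ k, (L k).Chain' fun p q => Segment.sub (Δ q) (Δ p)
  hσ : ∀ (k : ℕ) (n : ℕ) (hn : n < (L k).length),
    σ ((L k).get ⟨n, hn⟩) =
      (L k).get ⟨(n + 1) % (L k).length,
        Nat.mod_lt _ (Nat.lt_of_le_of_lt (Nat.zero_le n) hn)⟩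
  hΔ'a : ∀ i, (Δ' i).a = (Δ i).a
  hΔ'b : ∀ i, (Δ' i).b = (Δ (σ i)).b

/-- `i` belongs to the ladder index set `Î`: it is the last index of the admissible enumeration
of its depth fiber.  The highest ladder `𝔩(𝔪)` consists of the segments `Δ' i`, `i ∈ Î`, and the
derived multisegment `𝔪'` of the segments `Δ' i`, `i ∉ Î`. -/
def IhatP {I : Type*} (K : KnuthData I) (i : I) : Prop :=
  (K.L (K.d i)).getLast? = some i

lemma Segment.sub_refl' (s : Segment) : Segment.sub s s := ⟨le_refl _, le_refl _⟩

lemma Segment.sub_trans' {s t u : Segment} (h1 : Segment.sub s t) (h2 : Segment.sub t u) :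
    Segment.sub s u := ⟨le_trans h2.1 h1.1, le_trans h1.2 h2.2⟩

lemma chainFrom_cons {I : Type*} {Δ : I → Segment} {i j : I} {m : ℕ}
    (h : Segment.ll (Δ i) (Δ j)) (hc : ChainFrom Δ j m) : ChainFrom Δ i (m + 1) := by
  obtain ⟨f, hf0, hf⟩ := hc
  refine ⟨Fin.cases i f, by simp, ?_⟩
  intro r
  induction r using Fin.cases with
  | zero =>
      have e0 : (0 : Fin (m+1+1)) = Fin.castSucc 0 := rfl
      simp only [Fin.castSucc_zero, Fin.cases_zero]
      have : Fin.succ (0 : Fin (m+1)) = Fin.succ 0 := rfl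
      rw [this, Fin.cases_succ, hf0]
      exact h
  | succ t =>
      have h1 : (Fin.succ t).castSucc = (t.castSucc).succ := (Fin.succ_castSucc t).symm
      rw [h1]
      simpa using hf t

lemma chainFrom_tail {I : Type*} {Δ : I → Segment} {i : I} {m : ℕ}
    (hc : ChainFrom Δ i (m + 1)) :
    ∃ j, Segment.ll (Δ i) (Δ j) ∧ ChainFrom Δ j m := by
  obtain ⟨f, hf0, hf⟩ := hc
  refine ⟨f 1, ?_, ⟨fun r => f r.succ, rfl, fun r => ?_⟩⟩
  · have := hf 0
    simpa [hf0] using this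
  · have := hf (r.succ)
    rwa [show (Fin.succ r).castSucc = (r.castSucc).succ from (Fin.succ_castSucc r).symm] at this

lemma depth_succ_le {I : Type*} {Δ : I → Segment} {d : I → ℕ} (hd : IsDepth Δ d)
    {i j : I} (h : Segment.ll (Δ i) (Δ j)) : d j + 1 ≤ d i :=
  (hd i).2 (chainFrom_cons h (hd j).1)

lemma depth_step {I : Type*} {Δ : I → Segment} {d : I → ℕ} (hd : IsDepth Δ d)
    {i : I} {m : ℕ} (h : d i = m + 1) :
    ∃ j, Segment.ll (Δ i) (Δ j) ∧ d j = m := by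
  have hc : ChainFrom Δ i (m + 1) := h ▸ (hd i).1
  obtain ⟨j, hll, hcj⟩ := chainFrom_tail hc
  refine ⟨j, hll, le_antisymm ?_ ((hd j).2 hcj)⟩
  have := depth_succ_le hd hll
  omega

lemma depth_descend {I : Type*} {Δ : I → Segment} {d : I → ℕ} (hd : IsDepth Δ d) :
    ∀ (n : ℕ) (i : I) (k : ℕ), d i = k + n + 1 →
      ∃ j, d j = k ∧ (Δ i).a < (Δ j).a := by
  intro n
  induction n with
  | zero =>
      intro i k h
      obtain ⟨j, hll, hj⟩ := depth_step hd h
      exact ⟨j, hj, hll.1⟩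
  | succ n ih =>
      intro i k h
      obtain ⟨j1, hll, hj1⟩ := depth_step hd (show d i = (k + n + 1) + 1 by omega)
      obtain ⟨j, hj, hlt⟩ := ih j1 k hj1
      exact ⟨j, hj, lt_trans hll.1 hlt⟩

lemma fiber_pairwise {I : Type*} (K : KnuthData I) (k : ℕ) :
    (K.L k).Pairwise fun p q => Segment.sub (K.Δ q) (K.Δ p) := by
  letI : IsTrans I (fun p q => Segment.sub (K.Δ q) (K.Δ p)) :=
    ⟨fun a b c h1 h2 => Segment.sub_trans' h2 h1⟩
  exact List.isChain_iff_pairwise.mp (K.hchain k)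

lemma sub_last {I : Type*} (K : KnuthData I) {k : ℕ} {i0 : I}
    (h : (K.L k).getLast? = some i0) {p : I} (hp : p ∈ K.L k) :
    Segment.sub (K.Δ i0) (K.Δ p) := by
  have hne : K.L k ≠ [] := by intro e; rw [e] at h; simp at h
  have hlast : (K.L k).getLast hne = i0 := by
    have := List.getLast?_eq_getLast (l := K.L k) hne
    rw [this] at h; exact (Option.some_inj.mp h)
  obtain ⟨n, hn, rfl⟩ := List.mem_iff_get.mp hp
  rcases eq_or_lt_of_le (Nat.le_sub_one_of_lt n.2) with he | hlt
  · have : (K.L k).get n = i0 := by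
      rw [← hlast, List.getLast_eq_getElem, List.get_eq_getElem]
      congr 1
    rw [this]; exact Segment.sub_refl' _
  · have hlen : (K.L k).length - 1 < (K.L k).length := by
      have := n.2; omega
    have := (List.pairwise_iff_get.mp (fiber_pairwise K k)) n ⟨(K.L k).length - 1, hlen⟩ hlt
    have hi0 : (K.L k).get ⟨(K.L k).length - 1, hlen⟩ = i0 := by
      rw [← hlast, List.getLast_eq_getElem, List.get_eq_getElem]
    rwa [hi0] at this

lemma sub_head {I : Type*} (K : KnuthData I) {k : ℕ} (hne : (K.L k).length ≠ 0)
    {p : I} (hp : p ∈ K.L k) :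
    Segment.sub (K.Δ p) (K.Δ ((K.L k).get ⟨0, Nat.pos_of_ne_zero hne⟩)) := by
  obtain ⟨n, hn, rfl⟩ := List.mem_iff_get.mp hp
  rcases Nat.eq_zero_or_pos n.1 with he | hlt
  · have : n = ⟨0, Nat.pos_of_ne_zero hne⟩ := Fin.ext he
    rw [this]; exact Segment.sub_refl' _
  · exact (List.pairwise_iff_get.mp (fiber_pairwise K k)) ⟨0, Nat.pos_of_ne_zero hne⟩ n hlt

lemma sigma_last {I : Type*} (K : KnuthData I) {k : ℕ} {i0 : I}
    (h : (K.L k).getLast? = some i0) (hne : (K.L k).length ≠ 0) :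
    K.σ i0 = (K.L k).get ⟨0, Nat.pos_of_ne_zero hne⟩ := by
  have hne' : K.L k ≠ [] := by intro e; rw [e] at h; simp at h
  have hlast : (K.L k).getLast hne' = i0 := by
    have := List.getLast?_eq_getLast (l := K.L k) hne'
    rw [this] at h; exact (Option.some_inj.mp h)
  have hlen : (K.L k).length - 1 < (K.L k).length := by
    have := Nat.pos_of_ne_zero hne; omega
  have hi0 : (K.L k).get ⟨(K.L k).length - 1, hlen⟩ = i0 := by
    rw [← hlast, List.getLast_eq_getElem, List.get_eq_getElem]
  have := K.hσ k ((K.L k).length - 1) hlen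
  rw [hi0] at this
  rw [this]
  congr 1
  apply Fin.ext
  simp only []
  have h1 : (K.L k).length - 1 + 1 = (K.L k).length := by
    have := Nat.pos_of_ne_zero hne; omega
  rw [h1, Nat.mod_self]

/-- If `min 𝔩(𝔪) = min 𝔪` and some index of maximal depth `dm` begins at `min 𝔪`, then the
segment of the highest ladder beginning at `min 𝔪` contains every segment of depth `dm` and
itself occurs as a segment of `𝔪` of depth `dm`. -/
theorem ladder_min_segment_is_max_containment {I : Type*} [Fintype I] [Nonempty I]
    (K : KnuthData I)
    (m0 : ℤ) (hm0 : IsLeast {x | ∃ i, (K.Δ i).a = x} m0)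
    (hml : IsLeast {x | ∃ i, IhatP K i ∧ (K.Δ' i).a = x} m0)
    (dm : ℕ) (hdm : IsGreatest (Set.range K.d) dm)
    (iw : I) (hiwd : K.d iw = dm) (hiwa : (K.Δ iw).a = m0)
    (i0 : I) (hi0 : IhatP K i0) (hi0a : (K.Δ' i0).a = m0) :
    (∀ j, K.d j = dm → Segment.sub (K.Δ j) (K.Δ' i0)) ∧
      ∃ j, K.d j = dm ∧ (K.Δ j).a = (K.Δ' i0).a ∧ (K.Δ j).b = (K.Δ' i0).b := by
  have hi0a' : (K.Δ i0).a = m0 := by rw [← K.hΔ'a]; exact hi0a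
  have hlast : (K.L (K.d i0)).getLast? = some i0 := hi0
  -- Step 1 : `d i0 = dm`
  have hk : K.d i0 = dm := by
    by_contra hne
    have hle : K.d i0 ≤ dm := hdm.2 (Set.mem_range_self i0)
    have hlt : K.d i0 < dm := lt_of_le_of_ne hle hne
    obtain ⟨j, hj, hja⟩ := depth_descend K.hd (dm - K.d i0 - 1) iw (K.d i0)
      (by omega)
    have hjmem : j ∈ K.L (K.d i0) := (K.hmem _ j).mpr hj
    have hsub := sub_last K hlast hjmem
    have : (K.Δ j).a ≤ m0 := hi0a' ▸ hsub.1
    rw [hiwa] at hja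
    omega
  rw [hk] at hlast
  have hiwmem : iw ∈ K.L dm := (K.hmem dm iw).mpr hiwd
  have hlen : (K.L dm).length ≠ 0 := by
    intro e
    rw [List.length_eq_zero_iff] at e
    rw [e] at hiwmem
    simp at hiwmem
  set p0 : I := (K.L dm).get ⟨0, Nat.pos_of_ne_zero hlen⟩ with hp0
  have hσi0 : K.σ i0 = p0 := by
    have := sigma_last K hlast hlen; rw [this]
  have hΔ'b : (K.Δ' i0).b = (K.Δ p0).b := by rw [K.hΔ'b, hσi0]
  have hp0mem : p0 ∈ K.L dm := List.get_mem _ _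
  constructor
  · intro j hj
    have hjmem : j ∈ K.L dm := (K.hmem dm j).mpr hj
    have hsub := sub_head K hlen hjmem
    constructor
    · rw [hi0a]; exact hm0.2 ⟨j, rfl⟩
    · rw [hΔ'b]; exact hsub.2
  · refine ⟨p0, (K.hmem dm p0).mp hp0mem, ?_, hΔ'b.symm⟩
    have h1 := (sub_last K hlast hp0mem).1
    rw [hi0a'] at h1
    have h2 : m0 ≤ (K.Δ p0).a := hm0.2 ⟨p0, rfl⟩
    rw [hi0a]
    omega
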